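/- arXiv:1404.4466 — 5 statements merged into one kernel-verified Lean document; each statement's English description precedes it below -/
import Mathlib

section
/- Let Σ be a finite alphabet of size b ≥ 1 with numeric representation σ : Σ* → ℕ, and for words u, v ∈ Σ* define the 6×6 integer matrix A(u,v) whose rows are: (b^{2|u|},0,0,0,0,0), (0,b^{|u|+|v|},0,0,0,0), (0,0,b^{2|v|},0,0,0), (σ(u)b^{|u|}, σ(v)b^{|u|}, 0, b^{|u|}, 0, 0), (0, σ(u)b^{|v|}, σ(v)b^{|v|}, 0, b^{|v|}, 0), (σ(u)², 2σ(u)σ(v), σ(v)², 2σ(u), 2σ(v), 1). Then for all words u₁, u₂, v₁, v₂ ∈ Σ*: A(u₁,v₁)·A(u₂,v₂) = A(u₁u₂, v₁v₂). -/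
/-! `A(u,v)` depends on `u` and `v` only through `p = b^|u|`, `q = b^|v|`, `x = σ(u)`, `y = σ(v)`,
and as a function of these parameters it is multiplicative for the monoid law
`(p, x) * (p', x') = (p p', x p' + x')` on each coordinate (composition of the affine maps
`t ↦ p t + x`); concatenation of words realises this law, since `σ(u w) = σ(u) b^|w| + σ(w)`. -/

def numRep {S : Type*} (b : ℕ) (e : S ≃ Fin b) (w : List S) : ℕ :=
  ∑ j : Fin w.length, ((e (w.get j) : ℕ) + 1) * b ^ (w.length - 1 - (j : ℕ))

/-- The 6×6 integer encoding matrix `A(u,v)` built from the numeric representation `σ`. -/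
def encMat {S : Type*} (b : ℕ) (e : S ≃ Fin b) (u v : List S) :
    Matrix (Fin 6) (Fin 6) ℤ :=
  !![(b : ℤ) ^ (2 * u.length), 0, 0, 0, 0, 0;
     0, (b : ℤ) ^ (u.length + v.length), 0, 0, 0, 0;
     0, 0, (b : ℤ) ^ (2 * v.length), 0, 0, 0;
     (numRep b e u : ℤ) * (b : ℤ) ^ u.length, (numRep b e v : ℤ) * (b : ℤ) ^ u.length, 0,
       (b : ℤ) ^ u.length, 0, 0;
     0, (numRep b e u : ℤ) * (b : ℤ) ^ v.length, (numRep b e v : ℤ) * (b : ℤ) ^ v.length, 0,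
       (b : ℤ) ^ v.length, 0;
     (numRep b e u : ℤ) ^ 2, 2 * (numRep b e u : ℤ) * (numRep b e v : ℤ), (numRep b e v : ℤ) ^ 2,
       2 * (numRep b e u : ℤ), 2 * (numRep b e v : ℤ), 1]

section numRep

variable {S : Type*} (b : ℕ) (e : S ≃ Fin b)

@[simp]
lemma numRep_nil : numRep b e [] = 0 := rfl

lemma numRep_cons (a : S) (w : List S) :
    numRep b e (a :: w) = ((e a : ℕ) + 1) * b ^ w.length + numRep b e w := by
  simp only [numRep, List.length_cons, Fin.sum_univ_succ, Fin.val_succ]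
  simp [Nat.sub_sub, Nat.add_comm]

lemma numRep_append (u w : List S) :
    numRep b e (u ++ w) = numRep b e u * b ^ w.length + numRep b e w := by
  induction u with
  | nil => simp
  | cons a u ih =>
    rw [List.cons_append, numRep_cons, numRep_cons, ih, List.length_append]
    ring

end numRep

section quadMat

variable {R : Type*} [CommRing R]

def quadMat (p q x y : R) : Matrix (Fin 6) (Fin 6) R :=
  !![p ^ 2, 0, 0, 0, 0, 0;
     0, p * q, 0, 0, 0, 0;
     0, 0, q ^ 2, 0, 0, 0;
     x * p, y * p, 0, p, 0, 0;
     0, x * q, y * q, 0, q, 0;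
     x ^ 2, 2 * x * y, y ^ 2, 2 * x, 2 * y, 1]

lemma quadMat_mul (p q x y p' q' x' y' : R) :
    quadMat p q x y * quadMat p' q' x' y' =
      quadMat (p * p') (q * q') (x * p' + x') (y * q' + y') := by
  ext i j
  fin_cases i <;> fin_cases j <;>
    simp [quadMat, Matrix.mul_apply, Fin.sum_univ_succ] <;> ring

end quadMat

lemma encMat_eq_quadMat {S : Type*} (b : ℕ) (e : S ≃ Fin b) (u v : List S) :
    encMat b e u v =
      quadMat ((b : ℤ) ^ u.length) ((b : ℤ) ^ v.length) (numRep b e u) (numRep b e v) := by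
  rw [encMat, quadMat, pow_mul', pow_mul', pow_add]

theorem encMat_mul_general {S : Type*} (b : ℕ) (e : S ≃ Fin b)
    (u₁ u₂ v₁ v₂ : List S) :
    encMat b e u₁ v₁ * encMat b e u₂ v₂ = encMat b e (u₁ ++ u₂) (v₁ ++ v₂) := by
  simp only [encMat_eq_quadMat, quadMat_mul]
  push_cast [numRep_append, List.length_append, pow_add]
  rfl

theorem encMat_mul {S : Type*} (b : ℕ) (hb : 1 ≤ b) (e : S ≃ Fin b)
    (u₁ u₂ v₁ v₂ : List S) :
    encMat b e u₁ v₁ * encMat b e u₂ v₂ = encMat b e (u₁ ++ u₂) (v₁ ++ v₂) :=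
  encMat_mul_general b e u₁ u₂ v₁ v₂
end

section
/- Let (u_α, v_α)_{α∈[d]} be pairs of words over a finite alphabet Σ of size b ≥ 1, defining morphisms U, V : [d]* → Σ* by U(w) = u_{w₁}u_{w₂}⋯u_{w_{|w|}} and V(w) = v_{w₁}v_{w₂}⋯v_{w_{|w|}}. Let A(u,v) be the 6×6 integer matrix built from the numeric representation σ (with rows (b^{2|u|},0,0,0,0,0), (0,b^{|u|+|v|},0,0,0,0), (0,0,b^{2|v|},0,0,0), (σ(u)b^{|u|}, σ(v)b^{|u|}, 0, b^{|u|}, 0, 0), (0, σ(u)b^{|v|}, σ(v)b^{|v|}, 0, b^{|v|}, 0), (σ(u)², 2σ(u)σ(v), σ(v)², 2σ(u), 2σ(v), 1)), and set A^{(α)} := A(u_α, v_α) for α ∈ [d]. Then for every word w ∈ [d]*, the matrix product A^{(w)} := A^{(w₁)}A^{(w₂)}⋯A^{(w_{|w|})} equals A(U(w), V(w)). -/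
/-!
With `m(X, Y) = (X², 2XY, Y², 2X, 2Y, 1)`, the row vector `m(X, Y) * A(u, v)` is
`m(b^|u| X + σ(u), b^|v| Y + σ(v))`. Since `σ(u ++ u') = σ(u) b^|u'| + σ(u')`, these affine
substitutions compose like concatenation, so `A(u, v) * A(u', v') = A(u ++ u', v ++ v')`, and
the theorem follows by induction on `w`.
-/

section

variable {S : Type*} (b : ℕ) (e : S ≃ Fin b)

lemma encMat_nil_nil : encMat b e [] [] = 1 := by
  ext i j
  fin_cases i <;> fin_cases j <;> simp [encMat, numRep]

lemma encMat_mul_encMat (u v u' v' : List S) :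
    encMat b e u v * encMat b e u' v' = encMat b e (u ++ u') (v ++ v') := by
  ext i j
  fin_cases i <;> fin_cases j <;>
    simp [encMat, Matrix.mul_apply, Fin.sum_univ_succ, numRep_append, pow_add] <;> ring

end

theorem encMat_word_prod_general {S : Type*} (b d : ℕ) (e : S ≃ Fin b)
    (u v : Fin d → List S) (w : List (Fin d)) :
    (w.map fun α => encMat b e (u α) (v α)).prod
      = encMat b e ((w.map u).flatten) ((w.map v).flatten) := by
  induction w with
  | nil => exact (encMat_nil_nil b e).symm
  | cons a w ih =>
    rw [List.map_cons, List.prod_cons, ih, encMat_mul_encMat]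
    rfl

/-- For a PCP instance `(u_α, v_α)_{α ∈ [d]}` with encoding matrices
`A^{(α)} = A(u_α, v_α)`, the matrix product `A^{(w)} = A^{(w₁)}⋯A^{(w_n)}`
equals `A(U(w), V(w))`, where `U(w) = u_{w₁}⋯u_{w_n}` and `V(w) = v_{w₁}⋯v_{w_n}`. -/
theorem encMat_word_prod {S : Type*} (b d : ℕ) (hb : 1 ≤ b) (e : S ≃ Fin b)
    (u v : Fin d → List S) (w : List (Fin d)) :
    (w.map fun α => encMat b e (u α) (v α)).prod
      = encMat b e ((w.map u).flatten) ((w.map v).flatten) :=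
  encMat_word_prod_general b d e u v w
end

section
/- (Lemma 1 of the paper.) Let (u_α, v_α)_{α∈[d]} be any instance of the Post correspondence problem over a finite alphabet Σ, and let λ ∈ ℚ be a threshold. Then there exist boundary vectors L, R ∈ ℚ⁶ and matrices A^{(1)}, …, A^{(d)} with nonnegative integer entries, of size 6×6, such that for the induced morphism A : [d]* → ℚ^{6×6} (given by A^{(w)} = A^{(w₁)}⋯A^{(w_{|w|})}) and every word w ∈ [d]*: ⟨L, A^{(w)} R⟩ = −(λ+1) if U(w) = V(w), and ⟨L, A^{(w)} R⟩ ≥ −λ if U(w) ≠ V(w). -/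
/-!
Encode a word over `S` injectively as a natural number `code x` (its base-`b` expansion,
letters being nonzero digits), so that `code (x ++ y) = code x + b ^ |x| * code y`.
Prepending `u_α` is then an affine map `X ↦ code u_α + b ^ |u_α| * X`, and a pair of affine
maps acts linearly on the degree-at-most-two monomials `(X², XY, Y², X, Y, 1)` by a matrix
with natural entries. Starting from `(0, 0, 0, 0, 0, 1)`, the product along `w` reaches the
monomials in `X = code U(w)` and `Y = code V(w)`, and `L` extracts `(X - Y)² - (λ + 1)`,
which is `-(λ + 1)` when `U(w) = V(w)` and at least `-λ` otherwise.
-/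

open Matrix

noncomputable section WordCode

variable {S : Type*} [Fintype S]

def letterDigit (a : S) : ℕ := (Fintype.equivFin S a : ℕ) + 1

-- `+ 2` keeps the base above `1` also for empty `S`.
def codeBase (S : Type*) [Fintype S] : ℕ := Fintype.card S + 2

def wordCode (x : List S) : ℕ := Nat.ofDigits (codeBase S) (x.map letterDigit)

lemma letterDigit_injective : Function.Injective (letterDigit (S := S)) := fun _ _ h =>
  (Fintype.equivFin S).injective (Fin.ext (Nat.succ_injective h))

lemma letterDigit_lt_codeBase (a : S) : letterDigit a < codeBase S := by
  have := (Fintype.equivFin S a).isLt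
  unfold letterDigit codeBase
  omega

@[simp] lemma wordCode_nil : wordCode ([] : List S) = 0 := rfl

lemma wordCode_append (x y : List S) :
    wordCode (x ++ y) = wordCode x + codeBase S ^ x.length * wordCode y := by
  simp only [wordCode, List.map_append, Nat.ofDigits_append, List.length_map]

lemma digits_wordCode (x : List S) :
    (codeBase S).digits (wordCode x) = x.map letterDigit :=
  Nat.digits_ofDigits _ (by unfold codeBase; omega) _
    (by simpa using fun a _ => letterDigit_lt_codeBase a)
    (fun _ => by simp [List.getLast_map, letterDigit])

lemma wordCode_injective : Function.Injective (wordCode (S := S)) := fun x y h =>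
  List.map_injective_iff.mpr letterDigit_injective
    (by rw [← digits_wordCode, ← digits_wordCode, h])

end WordCode

section QuadMonomials

variable {R : Type*} [CommSemiring R]

def quadMonomials (X Y : R) : Fin 6 → R := ![X ^ 2, X * Y, Y ^ 2, X, Y, 1]

def quadMonomialsMatrix (p a q c : R) : Matrix (Fin 6) (Fin 6) R :=
  !![p ^ 2, 0, 0, 2 * p * a, 0, a ^ 2;
     0, p * q, 0, p * c, q * a, a * c;
     0, 0, q ^ 2, 0, 2 * q * c, c ^ 2;
     0, 0, 0, p, 0, a;
     0, 0, 0, 0, q, c;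
     0, 0, 0, 0, 0, 1]

lemma quadMonomialsMatrix_mulVec (p a q c X Y : R) :
    quadMonomialsMatrix p a q c *ᵥ quadMonomials X Y =
      quadMonomials (a + p * X) (c + q * Y) := by
  ext i
  fin_cases i <;>
    simp [quadMonomialsMatrix, quadMonomials, mulVec, dotProduct, Fin.sum_univ_six] <;> ring

lemma quadMonomialsMatrix_map {R' : Type*} [CommSemiring R'] (f : R →+* R') (p a q c : R) :
    (quadMonomialsMatrix p a q c).map f = quadMonomialsMatrix (f p) (f a) (f q) (f c) := by
  ext i j
  fin_cases i <;> fin_cases j <;> simp [quadMonomialsMatrix, map_ofNat]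

end QuadMonomials

lemma dotProduct_quadMonomials {R : Type*} [CommRing R] (t X Y : R) :
    ![1, -2, 1, 0, 0, t] ⬝ᵥ quadMonomials X Y = (X - Y) ^ 2 + t := by
  simp [quadMonomials, dotProduct, Fin.sum_univ_six]
  ring

lemma one_le_sq_natCast_sub_of_ne {R : Type*} [Ring R] [LinearOrder R] [IsStrictOrderedRing R]
    {m n : ℕ} (h : m ≠ n) : (1 : R) ≤ ((m : R) - n) ^ 2 := by
  have hz : (m : ℤ) - n ≠ 0 := sub_ne_zero.mpr (by exact_mod_cast h)
  rw [one_le_sq_iff_one_le_abs]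
  exact_mod_cast Int.one_le_abs hz

noncomputable section PCPMatrix

variable {S : Type*} [Fintype S]

def wordPairMatrix (x y : List S) : Matrix (Fin 6) (Fin 6) ℚ :=
  quadMonomialsMatrix (codeBase S ^ x.length : ℕ) (wordCode x) (codeBase S ^ y.length : ℕ)
    (wordCode y)

lemma wordPairMatrix_mulVec (x y x' y' : List S) :
    wordPairMatrix x y *ᵥ quadMonomials (wordCode x' : ℚ) (wordCode y') =
      quadMonomials (wordCode (x ++ x') : ℚ) (wordCode (y ++ y')) := by
  rw [wordPairMatrix, quadMonomialsMatrix_mulVec, wordCode_append, wordCode_append]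
  push_cast
  rfl

lemma exists_wordPairMatrix_apply_eq_natCast (x y : List S) (i j : Fin 6) :
    ∃ m : ℕ, wordPairMatrix x y i j = m :=
  ⟨quadMonomialsMatrix (codeBase S ^ x.length) (wordCode x) (codeBase S ^ y.length)
    (wordCode y) i j, by
    rw [wordPairMatrix, ← Nat.coe_castRingHom, ← quadMonomialsMatrix_map]
    rfl⟩

lemma prod_wordPairMatrix_mulVec {ι : Type*} (u v : ι → List S) (w : List ι) :
    (w.map fun α => wordPairMatrix (u α) (v α)).prod *ᵥ quadMonomials 0 0 =
      quadMonomials (wordCode (w.map u).flatten : ℚ) (wordCode (w.map v).flatten) := by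
  induction w with
  | nil => simp
  | cons α w ih =>
    simp only [List.map_cons, List.prod_cons, List.flatten_cons, ← mulVec_mulVec, ih,
      wordPairMatrix_mulVec]

end PCPMatrix

open Matrix in
/-- Lemma 1 of the paper: for any instance `(u_α, v_α)_{α ∈ [d]}` of the Post
correspondence problem over a finite alphabet `Σ` and any threshold `λ ∈ ℚ`,
there are boundary vectors `L, R ∈ ℚ⁶` and 6×6 matrices `A^{(1)}, …, A^{(d)}` with
nonnegative integer entries such that, for the induced morphism
`A^{(w)} = A^{(w₁)}⋯A^{(w_n)}` and every word `w ∈ [d]*`,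
`⟨L, A^{(w)} R⟩ = −(λ+1)` if `U(w) = V(w)`, and `⟨L, A^{(w)} R⟩ ≥ −λ` if `U(w) ≠ V(w)`. -/
theorem lemma_one {S : Type*} [Fintype S] (d : ℕ) (u v : Fin d → List S) (lam : ℚ) :
    ∃ (L R : Fin 6 → ℚ) (A : Fin d → Matrix (Fin 6) (Fin 6) ℚ),
      (∀ (α : Fin d) (i j : Fin 6), ∃ m : ℕ, A α i j = (m : ℚ)) ∧
      ∀ w : List (Fin d),
        ((w.map u).flatten = (w.map v).flatten →
          L ⬝ᵥ ((w.map A).prod.mulVec R) = -(lam + 1)) ∧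
        ((w.map u).flatten ≠ (w.map v).flatten →
          -lam ≤ L ⬝ᵥ ((w.map A).prod.mulVec R)) := by
  refine ⟨![1, -2, 1, 0, 0, -(lam + 1)], quadMonomials 0 0,
    fun α => wordPairMatrix (u α) (v α), fun α => exists_wordPairMatrix_apply_eq_natCast (u α) (v α), ?_⟩
  intro w
  rw [prod_wordPairMatrix_mulVec, dotProduct_quadMonomials]
  refine ⟨fun h => by rw [h]; ring, fun h => ?_⟩
  have hsq := one_le_sq_natCast_sub_of_ne (R := ℚ) (wordCode_injective.ne h)
  linarith
end

section
/- (Lemma 2 of the paper.) Let d, D ≥ 2, let A^{(1)}, …, A^{(d)} ∈ ℚ^{D×D} be matrices (defining the morphism A : [d]* → ℚ^{D×D} by A^{(w)} = A^{(w₁)}⋯A^{(w_{|w|})}), and let L, R ∈ ℚ^D be boundary vectors. Then there exist two matrices B^{(1)}, B^{(2)} ∈ ℚ^{Dd×Dd} (defining the morphism B : [2]* → ℚ^{Dd×Dd}) together with an injective morphism X : [d]* → [2]* satisfying |X(w)| = d·|w| for all w, such that ⟨L̃, B^{(X(w))} R̃⟩ = ⟨L, A^{(w)} R⟩ for all w ∈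 [d]*, where L̃, R̃ ∈ ℚ^{Dd} are obtained from L, R by appending zeros. -/
/-!
Split `ℚ^{Dd}` into `d` blocks of size `D`, indexed cyclically by `Fin d`. The binary letter `0`
moves each block unchanged to the next one, the letter `1` moves block `j` to block `j + 1`
through `A^{(j)}`. Encode the letter `a` as `0^a 1 0^{d-1-a}`: from block `0` the first `a` shifts
reach block `a`, the `1` applies `A^{(a)}`, and the remaining shifts close the cycle back to
block `0`. So a vector supported on block `0` evolves under `B^{(X(w))}` exactly as under
`A^{(w)}`. The code is injective since its codewords are distinct and all of length `d`.
-/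

open Matrix

theorem List.flatMap_injective_of_length_eq {α β : Type*} {f : α → List β} {k : ℕ}
    (hf : Function.Injective f) (hne : ∀ a, f a ≠ []) (hk : ∀ a, (f a).length = k) :
    Function.Injective (List.flatMap f) := by
  intro u v huv
  induction u generalizing v with
  | nil =>
    cases v with
    | nil => rfl
    | cons b v => exact absurd (List.append_eq_nil_iff.mp huv.symm).1 (hne b)
  | cons a u ih =>
    cases v with
    | nil => exact absurd (List.append_eq_nil_iff.mp huv).1 (hne a)
    | cons b v =>
      obtain ⟨hab, hrest⟩ := List.append_inj huv ((hk a).trans (hk b).symm)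
      rw [hf hab, ih hrest]

namespace Matrix

variable {R m n : Type*} [Semiring R] [Fintype m] [Fintype n]

theorem reindex_list_prod [DecidableEq m] [DecidableEq n] (e : m ≃ n) (l : List (Matrix m m R)) :
    reindex e e l.prod = (l.map (reindex e e)).prod :=
  map_list_prod (reindexRingEquiv R e) l

theorem dotProduct_reindex_mulVec (e : m ≃ n) (M : Matrix m m R) (u v : n → R) :
    u ⬝ᵥ reindex e e M *ᵥ v = (u ∘ e) ⬝ᵥ M *ᵥ (v ∘ e) := by
  rw [reindex_apply, submatrix_mulVec_equiv, dotProduct_comp_equiv_symm, Equiv.symm_symm]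

end Matrix

namespace BinaryEncoding

section Code

variable {d : ℕ}

def letterCode (d : ℕ) (a : Fin d) : List (Fin 2) :=
  List.replicate a 0 ++ 1 :: List.replicate (d - 1 - a) 0

def wordCode (d : ℕ) (w : List (Fin d)) : List (Fin 2) :=
  w.flatMap (letterCode d)

theorem length_letterCode (a : Fin d) : (letterCode d a).length = d := by
  simp only [letterCode, List.length_append, List.length_replicate, List.length_cons]
  omega

theorem idxOf_letterCode (a : Fin d) : (letterCode d a).idxOf 1 = a := by
  simp [letterCode, List.idxOf_append]

theorem letterCode_injective : Function.Injective (letterCode d) := fun a b h =>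
  Fin.ext <| by rw [← idxOf_letterCode a, ← idxOf_letterCode b, h]

theorem wordCode_append (u v : List (Fin d)) :
    wordCode d (u ++ v) = wordCode d u ++ wordCode d v :=
  List.flatMap_append

theorem wordCode_cons (a : Fin d) (w : List (Fin d)) :
    wordCode d (a :: w) = letterCode d a ++ wordCode d w :=
  List.flatMap_cons

theorem length_wordCode (w : List (Fin d)) : (wordCode d w).length = d * w.length := by
  simp [wordCode, List.length_flatMap, length_letterCode, mul_comm]

theorem wordCode_injective : Function.Injective (wordCode d) :=
  List.flatMap_injective_of_length_eq letterCode_injective (by simp [letterCode])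
    length_letterCode

end Code

section Automaton

variable {R n : Type*} {d : ℕ}

def blockVec [Zero R] (j : Fin d) (v : n → R) : Fin d × n → R :=
  fun p => if p.1 = j then v p.2 else 0

def stepMatrix [Zero R] [NeZero d] (A : Fin d → Matrix n n R) :
    Matrix (Fin d × n) (Fin d × n) R :=
  of fun p q => if q.1 = p.1 + 1 then A p.1 p.2 q.2 else 0

theorem blockVec_vecMul_stepMatrix [Semiring R] [Fintype n] [NeZero d]
    (A : Fin d → Matrix n n R) (j : Fin d) (v : n → R) :
    blockVec j v ᵥ* stepMatrix A = blockVec (j + 1) (v ᵥ* A j) := by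
  funext q
  show ∑ p : Fin d × n, blockVec j v p * stepMatrix A p q = _
  rw [Fintype.sum_prod_type, Finset.sum_eq_single j]
  · by_cases h : q.1 = j + 1 <;> simp [blockVec, stepMatrix, h, vecMul, dotProduct]
  · intro j' _ hj'
    simp [blockVec, hj']
  · simp

open Fin.NatCast in
theorem blockVec_vecMul_stepMatrix_one_pow [Semiring R] [Fintype n] [DecidableEq n] [NeZero d]
    (k : ℕ) (j : Fin d) (v : n → R) :
    blockVec j v ᵥ* stepMatrix (1 : Fin d → Matrix n n R) ^ k
      = blockVec (j + (k : Fin d)) v := by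
  induction k generalizing j with
  | zero => simp
  | succ k ih =>
    rw [pow_succ', ← vecMul_vecMul, blockVec_vecMul_stepMatrix, Pi.one_apply, vecMul_one, ih,
      Nat.cast_succ, add_comm (k : Fin d), add_assoc]

def codeMatrix [Zero R] [One R] [DecidableEq n] [NeZero d] (A : Fin d → Matrix n n R)
    (i : Fin 2) : Matrix (Fin d × n) (Fin d × n) R :=
  stepMatrix (![1, A] i)

open Fin.NatCast in
theorem blockVec_vecMul_letterCode [Semiring R] [Fintype n] [DecidableEq n] [NeZero d]
    (A : Fin d → Matrix n n R) (a : Fin d) (v : n → R) :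
    blockVec 0 v ᵥ* ((letterCode d a).map (codeMatrix A)).prod = blockVec 0 (v ᵥ* A a) := by
  have hcycle : a + 1 + ((d - 1 - a : ℕ) : Fin d) = 0 := by
    have hd : (a + 1 + (d - 1 - a) : ℕ) = d := by omega
    simpa only [Nat.cast_add, Fin.cast_val_eq_self, Nat.cast_one, Fin.natCast_self]
      using congrArg (Nat.cast : ℕ → Fin d) hd
  have hshift : codeMatrix A 0 = stepMatrix 1 := rfl
  have hstep : codeMatrix A 1 = stepMatrix A := rfl
  rw [letterCode, List.map_append, List.map_replicate, List.map_cons, List.map_replicate,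
    List.prod_append, List.prod_cons, List.prod_replicate, List.prod_replicate, hshift, hstep,
    ← vecMul_vecMul, ← vecMul_vecMul, blockVec_vecMul_stepMatrix_one_pow, zero_add,
    Fin.cast_val_eq_self, blockVec_vecMul_stepMatrix, blockVec_vecMul_stepMatrix_one_pow, hcycle]

theorem blockVec_vecMul_wordCode [Semiring R] [Fintype n] [DecidableEq n] [NeZero d]
    (A : Fin d → Matrix n n R) (w : List (Fin d)) (v : n → R) :
    blockVec 0 v ᵥ* ((wordCode d w).map (codeMatrix A)).prod
      = blockVec 0 (v ᵥ* (w.map A).prod) := by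
  induction w generalizing v with
  | nil => simp [wordCode]
  | cons a w ih =>
    rw [wordCode_cons, List.map_append, List.prod_append, ← vecMul_vecMul,
      blockVec_vecMul_letterCode, ih, List.map_cons, List.prod_cons, vecMul_vecMul]

theorem blockVec_dotProduct_blockVec [Semiring R] [Fintype n] (j : Fin d) (u v : n → R) :
    blockVec j u ⬝ᵥ blockVec j v = u ⬝ᵥ v := by
  simp only [dotProduct, Fintype.sum_prod_type, blockVec]
  rw [Finset.sum_eq_single j]
  · simp
  · intro j' _ hj'; simp [hj']
  · simp

theorem blockVec_dotProduct_wordCode_mulVec [Semiring R] [Fintype n] [DecidableEq n] [NeZero d]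
    (A : Fin d → Matrix n n R) (w : List (Fin d)) (u v : n → R) :
    blockVec 0 u ⬝ᵥ ((wordCode d w).map (codeMatrix A)).prod *ᵥ blockVec 0 v
      = u ⬝ᵥ (w.map A).prod *ᵥ v := by
  rw [dotProduct_mulVec, blockVec_vecMul_wordCode, blockVec_dotProduct_blockVec,
    dotProduct_mulVec]

end Automaton

section Reindex

variable {R : Type*} [Zero R]

def blockEquiv (d D : ℕ) : Fin d × Fin D ≃ Fin (D * d) :=
  finProdFinEquiv.trans (finCongr (mul_comm d D))

def zeroExtend (d : ℕ) {D : ℕ} (v : Fin D → R) : Fin (D * d) → R :=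
  fun k => if h : (k : ℕ) < D then v ⟨k, h⟩ else 0

theorem zeroExtend_comp_blockEquiv {d D : ℕ} [NeZero d] (v : Fin D → R) :
    zeroExtend d v ∘ blockEquiv d D = blockVec 0 v := by
  funext ⟨j, x⟩
  have hval : (blockEquiv d D (j, x) : ℕ) = x + D * j := rfl
  by_cases hj : j = 0
  · subst hj
    simp [zeroExtend, blockVec, hval]
  · have hj1 : 0 < (j : ℕ) := Nat.pos_of_ne_zero fun h => hj (Fin.ext h)
    have : D ≤ x + D * j := (Nat.le_mul_of_pos_right D hj1).trans (Nat.le_add_left _ _)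
    simp [zeroExtend, blockVec, hval, hj, this]

end Reindex

end BinaryEncoding

open BinaryEncoding in
open Matrix in
theorem lemma_two_general {d D : ℕ} (hd : 2 ≤ d)
    (A : Fin d → Matrix (Fin D) (Fin D) ℚ) (L R : Fin D → ℚ) :
    ∃ (B : Fin 2 → Matrix (Fin (D * d)) (Fin (D * d)) ℚ)
      (X : List (Fin d) → List (Fin 2)),
      X [] = [] ∧
      (∀ w₁ w₂ : List (Fin d), X (w₁ ++ w₂) = X w₁ ++ X w₂) ∧
      Function.Injective X ∧
      (∀ w : List (Fin d), (X w).length = d * w.length) ∧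
      (∀ w : List (Fin d),
        (fun k : Fin (D * d) => if h : (k : ℕ) < D then L ⟨k, h⟩ else 0) ⬝ᵥ
            (((X w).map B).prod.mulVec
              (fun k : Fin (D * d) => if h : (k : ℕ) < D then R ⟨k, h⟩ else 0))
          = L ⬝ᵥ ((w.map A).prod.mulVec R)) := by
  have : NeZero d := ⟨by omega⟩
  set e := blockEquiv d D
  refine ⟨reindex e e ∘ codeMatrix A, wordCode d, rfl, wordCode_append,
    wordCode_injective, length_wordCode, fun w => ?_⟩
  change zeroExtend d L ⬝ᵥ _ *ᵥ zeroExtend d R = _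
  rw [← List.map_map, ← reindex_list_prod, dotProduct_reindex_mulVec,
    zeroExtend_comp_blockEquiv, zeroExtend_comp_blockEquiv, blockVec_dotProduct_wordCode_mulVec]

open Matrix in
/-- Lemma 2 of the paper: given `d, D ≥ 2`, matrices `A^{(1)}, …, A^{(d)} ∈ ℚ^{D×D}`
and boundary vectors `L, R ∈ ℚ^D`, there exist two matrices `B^{(1)}, B^{(2)} ∈ ℚ^{Dd×Dd}`
and an injective morphism `X : [d]* → [2]*` with `|X(w)| = d·|w|` such that
`⟨L̃, B^{(X(w))} R̃⟩ = ⟨L, A^{(w)} R⟩` for all `w ∈ [d]*`, where `L̃, R̃ ∈ ℚ^{Dd}`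
are `L, R` extended by zeros. -/
theorem lemma_two {d D : ℕ} (hd : 2 ≤ d) (hD : 2 ≤ D)
    (A : Fin d → Matrix (Fin D) (Fin D) ℚ) (L R : Fin D → ℚ) :
    ∃ (B : Fin 2 → Matrix (Fin (D * d)) (Fin (D * d)) ℚ)
      (X : List (Fin d) → List (Fin 2)),
      X [] = [] ∧
      (∀ w₁ w₂ : List (Fin d), X (w₁ ++ w₂) = X w₁ ++ X w₂) ∧
      Function.Injective X ∧
      (∀ w : List (Fin d), (X w).length = d * w.length) ∧
      (∀ w : List (Fin d),
        (fun k : Fin (D * d) => if h : (k : ℕ) < D then L ⟨k, h⟩ else 0) ⬝ᵥ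
            (((X w).map B).prod.mulVec
              (fun k : Fin (D * d) => if h : (k : ℕ) < D then R ⟨k, h⟩ else 0))
          = L ⬝ᵥ ((w.map A).prod.mulVec R)) :=
  lemma_two_general hd A L R
end

section
/- Let d ≥ 1, n ≥ 2, D ≥ 1, and let P : [d]^n → ℝ be a tensor such that for every cut position k with 1 ≤ k ≤ n−1, the d^k × d^{n−k} matricization F^{(k)} with entries F^{(k)}_{(α₁,…,α_k),(α_{k+1},…,α_n)} := P(α₁,…,α_n) has rank at most D. Then there exist matrices M_t^{(α)} ∈ ℝ^{D×D} for t = 2,…,n−1 and α ∈ [d], row vectors L^{(α)} ∈ ℝ^{1×D} and column vectors R^{(α)} ∈ ℝ^{D×1} for α ∈ [d], such that P(α₁,…,α_n) = L^{(α₁)} · M_2^{(α₂)} ⋯ M_{n−1}^{(α_{n−1})} · R^{(α_n)} for all (α₁,…,α_n) ∈ [d]^n. -/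
/-!
Let `V j` be the space of functions of the last `j` letters obtained from `P` by freezing the
first `n - j` letters. It is the row space of the matricization at cut `n - j`, so it is spanned
by `D` functions `v j β`; and freezing one more letter maps `V (j + 1)` into `V j`. Writing
`v (j + 1) β (α :: ·)` in terms of the `v j γ` gives transfer matrices `T j α`, writing
`P (α :: ·) ∈ V (n - 1)` in terms of the `v (n - 1) β` gives `L α`, and `R α β := v 1 β α`.
Unrolling the recursion letter by letter yields the matrix product.
-/

/-- Glue a word of length `k` and a word of length `n − k` into a word of
length `n` (for `k ≤ n`). -/
def glueWords {d n k : ℕ} (hk : k ≤ n) (a : Fin k → Fin d) (c : Fin (n - k) → Fin d) :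
    Fin n → Fin d :=
  fun i => Fin.append a c (Fin.cast (by omega) i)

open Submodule Set Module Matrix

theorem exists_fin_span_range_eq_of_finrank_le {K V : Type*} [DivisionRing K] [AddCommGroup V]
    [Module K V] {S : Submodule K V} [FiniteDimensional K S] {D : ℕ} (hS : finrank K S ≤ D) :
    ∃ v : Fin D → V, span K (range v) = S := by
  let b := Module.finBasis K S
  let v : Fin D → S := Function.extend (Fin.castLE hS) b 0
  have hv : span K (range v) = ⊤ := eq_top_iff.2 <| b.span_eq.symm.le.trans <| span_mono <| by
    rintro _ ⟨i, rfl⟩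
    exact ⟨_, (Fin.castLE_injective hS).extend_apply b 0 i⟩
  exact ⟨S.subtype ∘ v, by rw [range_comp, span_image, hv, map_subtype_top]⟩

section MatrixProduct

variable {R X : Type*} [CommSemiring R] {D : ℕ}

theorem exists_dotProduct_eq_of_mem_span {Y : Type*} {v : Fin D → Y → R} {f : Y → R}
    (hf : f ∈ span R (range v)) : ∃ ℓ : Fin D → R, ∀ y, f y = ℓ ⬝ᵥ fun β => v β y := by
  obtain ⟨ℓ, rfl⟩ := (mem_span_range_iff_exists_fun R).1 hf
  exact ⟨ℓ, fun y => by simp [dotProduct]⟩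

-- Level `j` of `T` turns suffixes of length `j + 2` into suffixes of length `j + 1`, so the
-- letter at position `t` of a word of length `j + 1` is read by level `j - 1 - t`.
theorem eq_list_prod_mulVec_of_cons_eq_mulVec (T : ℕ → X → Matrix (Fin D) (Fin D) R)
    (φ : (j : ℕ) → (Fin (j + 1) → X) → Fin D → R) {m : ℕ}
    (hφ : ∀ j < m, ∀ α c, φ (j + 1) (Fin.cons α c) = T j α *ᵥ φ j c) :
    ∀ j ≤ m, ∀ c, φ j c =
      ((List.finRange j).map fun t : Fin j => T (j - 1 - t) (c t.castSucc)).prod *ᵥ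
        φ 0 fun _ => c (Fin.last j) := by
  intro j
  induction j with
  | zero =>
    intro _ c
    rw [List.finRange_zero, List.map_nil, List.prod_nil, one_mulVec]
    exact congrArg _ (funext fun i => congrArg c (Fin.ext (Nat.lt_one_iff.1 i.isLt)))
  | succ j ih =>
    intro hj c
    calc φ (j + 1) c = φ (j + 1) (Fin.cons (c 0) (Fin.tail c)) := by rw [Fin.cons_self_tail]
      _ = _ := by
        rw [hφ j hj, ih (Nat.le_of_succ_le hj), mulVec_mulVec, List.finRange_succ, List.map_cons,
          List.prod_cons, List.map_map]
        congr 3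
        refine List.map_congr_left fun t _ => ?_
        simp only [Function.comp_apply, Fin.tail, Fin.succ_castSucc, Fin.val_succ]
        congr 1
        omega

theorem exists_matrixProduct_repr_of_cons_mem
    (V : (j : ℕ) → Submodule R ((Fin (j + 1) → X) → R)) (m : ℕ)
    (hV : ∀ j ≤ m, ∃ v : Fin D → (Fin (j + 1) → X) → R, span R (range v) = V j)
    (hcons : ∀ j < m, ∀ f ∈ V (j + 1), ∀ α, (fun c => f (Fin.cons α c)) ∈ V j) :
    ∃ (M : Fin m → X → Matrix (Fin D) (Fin D) R) (ρ : X → Fin D → R), ∀ f ∈ V m,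
      ∃ ℓ : Fin D → R, ∀ c : Fin (m + 1) → X,
        f c = ℓ ⬝ᵥ ((List.finRange m).map fun t => M t (c t.castSucc)).prod *ᵥ
          ρ (c (Fin.last m)) := by
  -- padded with junk families beyond `m`, so that `choose` yields a function of `j` alone
  have hV' : ∀ j, ∃ v : Fin D → (Fin (j + 1) → X) → R, j ≤ m → span R (range v) = V j :=
    fun j => if hj : j ≤ m then (hV j hj).imp fun _ h _ => h else ⟨0, fun h => absurd h hj⟩
  choose v hv using hV'
  have hT : ∀ j α, ∃ T : Matrix (Fin D) (Fin D) R, j < m →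
      ∀ c, (fun β => v (j + 1) β (Fin.cons α c)) = T *ᵥ fun β => v j β c := by
    intro j α
    by_cases hj : j < m
    · have hrow : ∀ β, ∃ w : Fin D → R, ∀ c,
          v (j + 1) β (Fin.cons α c) = w ⬝ᵥ fun γ => v j γ c :=
        fun β => exists_dotProduct_eq_of_mem_span <| (hv j hj.le).symm ▸
          hcons j hj _ ((hv (j + 1) hj) ▸ subset_span ⟨β, rfl⟩) α
      choose w hw using hrow
      exact ⟨of w, fun _ c => funext fun β => hw β c⟩
    · exact ⟨0, fun h => absurd h hj⟩
  choose T hT using hT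
  refine ⟨fun t => T (m - 1 - t), fun α β => v 0 β fun _ => α, fun f hf => ?_⟩
  obtain ⟨ℓ, hℓ⟩ := exists_dotProduct_eq_of_mem_span ((hv m le_rfl).symm ▸ hf)
  exact ⟨ℓ, fun c => (hℓ c).trans <| congrArg _ <| eq_list_prod_mulVec_of_cons_eq_mulVec T
    (fun j c β => v j β c) (fun j hj α => hT j α hj) m le_rfl c⟩

end MatrixProduct

section Suffixes

variable {X : Type*} {n : ℕ}

def replaceSuffix (j : ℕ) (w : Fin n → X) (c : Fin j → X) : Fin n → X :=
  fun i => if h : n - j ≤ i then c ⟨i - (n - j), by omega⟩ else w i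

theorem replaceSuffix_self (w c : Fin n → X) : replaceSuffix n w c = c := by
  funext i; simp [replaceSuffix]

theorem replaceSuffix_succ_cons {j : ℕ} (hj : j < n) (w : Fin n → X) (α : X) (c : Fin j → X) :
    replaceSuffix (j + 1) w (Fin.cons α c) =
      replaceSuffix j (replaceSuffix (j + 1) w fun _ => α) c := by
  funext i
  simp only [replaceSuffix]
  split_ifs with h1 h2 h2
  · obtain ⟨k, hk⟩ : ∃ k, i - (n - (j + 1)) = k + 1 := ⟨i - (n - (j + 1)) - 1, by omega⟩
    simp only [hk]
    exact (Fin.cons_succ (α := fun _ => X) α c ⟨k, by omega⟩).trans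
      (congrArg c (by ext; simp; omega))
  · obtain hk : i - (n - (j + 1)) = 0 := by omega
    simp only [hk]
    exact Fin.cons_zero (α := fun _ => X) α c
  · omega
  · rfl

theorem glueWords_castLE_eq_replaceSuffix {d k : ℕ} (hk : k ≤ n) (w : Fin n → Fin d)
    (c : Fin (n - k) → Fin d) :
    glueWords hk (fun i => w (Fin.castLE hk i)) c = replaceSuffix (n - k) w c := by
  funext i
  rcases lt_or_ge (i : ℕ) k with h | h
  · have hi : Fin.cast (show n = k + (n - k) by omega) i = Fin.castAdd (n - k) ⟨i, h⟩ :=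
      Fin.ext rfl
    simp only [glueWords, replaceSuffix, hi, Fin.append_left]
    rw [dif_neg (by omega)]; rfl
  · have hi : Fin.cast (show n = k + (n - k) by omega) i = Fin.natAdd k ⟨i - k, by omega⟩ :=
      Fin.ext (by simp; omega)
    simp only [glueWords, replaceSuffix, hi, Fin.append_right]
    rw [dif_pos (by omega)]
    congr 2; omega

-- Rows are indexed by whole words rather than by prefixes of length `n - j`, which avoids casts
-- between `Fin (n - (n - j))` and `Fin j`.
def suffixSpace (K : Type*) [Semiring K] (P : (Fin n → X) → K) (j : ℕ) :
    Submodule K ((Fin j → X) → K) :=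
  span K (range fun w c => P (replaceSuffix j w c))

theorem mem_suffixSpace_self {K : Type*} [Semiring K] (P : (Fin n → X) → K) :
    P ∈ suffixSpace K P n := by
  rcases isEmpty_or_nonempty (Fin n → X) with h | h
  · rw [Subsingleton.elim P 0]
    exact zero_mem _
  · obtain ⟨w⟩ := h
    exact subset_span ⟨w, funext fun c => congrArg P (replaceSuffix_self w c)⟩

theorem cons_mem_suffixSpace {K : Type*} [Semiring K] {P : (Fin n → X) → K} {j : ℕ} (hj : j < n)
    {f : (Fin (j + 1) → X) → K} (hf : f ∈ suffixSpace K P (j + 1)) (α : X) :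
    (fun c => f (Fin.cons α c)) ∈ suffixSpace K P j := by
  have h : suffixSpace K P (j + 1) ≤
      (suffixSpace K P j).comap
        (LinearMap.funLeft K K fun c : Fin j → X => (Fin.cons α c : Fin (j + 1) → X)) := by
    rw [suffixSpace, span_le]
    rintro _ ⟨w, rfl⟩
    exact subset_span ⟨replaceSuffix (j + 1) w fun _ => α,
      funext fun c => by simp [replaceSuffix_succ_cons hj]⟩
  exact h hf

theorem finrank_suffixSpace_le_rank {K : Type*} [Field K] {d : ℕ} (P : (Fin n → Fin d) → K) {k : ℕ}
    (hk : k ≤ n) :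
    finrank K (suffixSpace K P (n - k)) ≤ (of fun a c => P (glueWords hk a c)).rank := by
  have hA : (of fun w c => P (replaceSuffix (n - k) w c)) =
      (of fun a c => P (glueWords hk a c)).submatrix (fun w i => w (Fin.castLE hk i)) id := by
    ext w c
    simp [glueWords_castLE_eq_replaceSuffix]
  calc finrank K (suffixSpace K P (n - k)) = (of fun w c => P (replaceSuffix (n - k) w c)).rank :=
        (rank_eq_finrank_span_row _).symm
    _ ≤ _ := hA ▸ rank_submatrix_le _ _ _

end Suffixes

open Matrix in
/-- Any tensor `P : [d]^n → ℝ` whose matricizations at every cut `k` (for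
`1 ≤ k ≤ n−1`) have rank at most `D` admits a (not necessarily positive)
matrix-product / quasi-realization representation with bond dimension `D`:
`P(α₁,…,α_n) = L^{(α₁)} · M₂^{(α₂)} ⋯ M_{n−1}^{(α_{n−1})} · R^{(α_n)}`. -/
theorem tensor_train_of_rank_le {d D n : ℕ} (hn : 2 ≤ n)
    (P : (Fin n → Fin d) → ℝ)
    (hrank : ∀ k : ℕ, 1 ≤ k → k ≤ n - 1 →
      ∀ hk : k ≤ n,
        Matrix.rank
            (Matrix.of fun (a : Fin k → Fin d) (c : Fin (n - k) → Fin d) =>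
              P (glueWords hk a c))
          ≤ D) :
    ∃ (L : Fin d → Fin D → ℝ) (M : Fin (n - 2) → Fin d → Matrix (Fin D) (Fin D) ℝ)
      (R : Fin d → Fin D → ℝ),
      ∀ a : Fin n → Fin d,
        P a = L (a ⟨0, by omega⟩) ⬝ᵥ
          ((((List.finRange (n - 2)).map
              (fun t => M t (a ⟨(t : ℕ) + 1, by have := t.isLt; omega⟩))).prod).mulVec
            (R (a ⟨n - 1, by omega⟩))) := by
  obtain ⟨m, rfl⟩ : ∃ m, n = m + 2 := ⟨n - 2, by omega⟩
  have hspan : ∀ j ≤ m, ∃ v : Fin D → (Fin (j + 1) → Fin d) → ℝ,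
      span ℝ (range v) = suffixSpace ℝ P (j + 1) := by
    intro j hj
    have hk : m + 2 - (j + 1) ≤ m + 2 := Nat.sub_le _ _
    have h := (finrank_suffixSpace_le_rank P hk).trans (hrank _ (by omega) (by omega) hk)
    rw [show m + 2 - (m + 2 - (j + 1)) = j + 1 by omega] at h
    exact exists_fin_span_range_eq_of_finrank_le h
  obtain ⟨M, R, hMR⟩ := exists_matrixProduct_repr_of_cons_mem (fun j => suffixSpace ℝ P (j + 1)) m
    hspan fun j hj f hf α => cons_mem_suffixSpace (by omega) hf α
  choose L hL using fun α => hMR _ (cons_mem_suffixSpace (by omega) (mem_suffixSpace_self P) α)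
  refine ⟨L, M, R, fun a => ?_⟩
  have h := hL (a 0) (Fin.tail a)
  rwa [Fin.cons_self_tail] at h
end
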